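/- arXiv:2512.13538 — 2 statements merged into one kernel-verified Lean document; each statement's English description precedes it below -/
import Mathlib

section
/- Let P and P' be separated distributed places with ins_P ≠ ∅ ≠ ins_{P'}. Then a sequence σ over the transitions adjacent to P ∪ P' is an in-sequence of P ∪ P' if and only if σ is nonempty, its projection onto transitions adjacent to P is empty or an in-sequence of P, and its projection onto transitions adjacent to P' is empty or an in-sequence of P'; moreover σ is a complete in-sequence of P ∪ P' iff both projections are complete in-sequences of P and P' respectively. -/
open Set

structure Net (P T : Type) where
  pre : T → Set P
  post : T → Set P
  minit : Set P

variable {P T : Type}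

def fireable (N : Net P T) (t : T) (M : Set P) : Prop := N.pre t ⊆ M

def fire (N : Net P T) (t : T) (M : Set P) : Set P := (M \ N.pre t) ∪ N.post t

def valid (N : Net P T) : Set P → List T → Prop
  | _, [] => True
  | M, t :: σ => fireable N t M ∧ valid N (fire N t M) σ

def runFrom (N : Net P T) (M : Set P) (σ : List T) : Set P :=
  σ.foldl (fun M t => fire N t M) M

def isFiringSeq (N : Net P T) (σ : List T) : Prop := valid N N.minit σ

def reachable (N : Net P T) (M : Set P) : Prop :=
  ∃ σ, isFiringSeq N σ ∧ runFrom N N.minit σ = M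

def safe (N : Net P T) : Prop :=
  ∀ M, reachable N M → ∀ t, fireable N t M → (N.post t \ N.pre t) ∩ M = ∅

/-- transitions inserting tokens into some place of `Q` (the set `•Q`). -/
def preQ (N : Net P T) (Q : Set P) : Set T := {t | (N.post t ∩ Q).Nonempty}

/-- transitions removing tokens from some place of `Q` (the set `Q•`). -/
def postQ (N : Net P T) (Q : Set P) : Set T := {t | (N.pre t ∩ Q).Nonempty}

def adjQ (N : Net P T) (Q : Set P) : Set T := preQ N Q ∪ postQ N Q

def insQ (N : Net P T) (Q : Set P) : Set T := preQ N Q \ postQ N Q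

def remQ (N : Net P T) (Q : Set P) : Set T := postQ N Q \ preQ N Q

def readQ (N : Net P T) (Q : Set P) : Set T :=
  {t ∈ adjQ N Q | N.pre t ∩ Q = N.post t ∩ Q}

def enablesQ (N : Net P T) (Q : Set P) : Set (T × T) :=
  {tu | (Q ∩ (N.post tu.1 \ N.pre tu.1) ∩ N.pre tu.2).Nonempty}

def disablesQ (N : Net P T) (Q : Set P) : Set (T × T) :=
  {tu | (Q ∩ (N.pre tu.1 \ N.post tu.1) ∩ N.pre tu.2).Nonempty}

def postList (N : Net P T) (l : List T) : Set P := ⋃ t ∈ l, N.post t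

def epreList (N : Net P T) (l : List T) : Set P := ⋃ t ∈ l, (N.pre t \ N.post t)

def isInSeq (N : Net P T) (Q : Set P) (σ : List T) : Prop :=
  σ ≠ [] ∧ (∀ t ∈ σ, t ∈ insQ N Q ∪ readQ N Q) ∧
  (∀ t ∈ σ.head?, t ∈ insQ N Q) ∧
  ∀ i (h : i < σ.length), 0 < i →
    Q ∩ N.pre (σ.get ⟨i, h⟩) ⊆ postList N (σ.take i) ∧
    Q ∩ (N.post (σ.get ⟨i, h⟩) \ N.pre (σ.get ⟨i, h⟩)) ∩ postList N (σ.take i) = ∅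

def isCInSeq (N : Net P T) (Q : Set P) (σ : List T) : Prop :=
  isInSeq N Q σ ∧ Q ⊆ postList N σ

def isOutSeq (N : Net P T) (Q : Set P) (σ : List T) : Prop :=
  σ ≠ [] ∧ (∀ t ∈ σ, t ∈ remQ N Q ∪ readQ N Q) ∧
  (∀ t ∈ σ.head?, t ∈ remQ N Q) ∧
  ∀ i (h : i < σ.length), 0 < i →
    Q ∩ N.pre (σ.get ⟨i, h⟩) ⊆ Q \ epreList N (σ.take i)

def isCOutSeq (N : Net P T) (Q : Set P) (σ : List T) : Prop :=
  isOutSeq N Q σ ∧ Q ⊆ epreList N σ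

def distPlace (N : Net P T) (Q : Set P) : Prop :=
  Q.Nonempty ∧
  adjQ N Q = insQ N Q ∪ remQ N Q ∪ readQ N Q ∧
  (∀ t ∈ insQ N Q, ∀ u ∈ remQ N Q, (t, u) ∈ enablesQ N Q) ∧
  (∀ σ, isInSeq N Q σ → ∃ τ, σ <+: τ ∧ isCInSeq N Q τ) ∧
  (∀ σ, isOutSeq N Q σ → ∃ τ, σ <+: τ ∧ isCOutSeq N Q τ)

def pureDP (N : Net P T) (Q : Set P) : Prop := postQ N Q ∩ preQ N Q = ∅

def separated (N : Net P T) (Q R : Set P) : Prop := adjQ N Q ∩ adjQ N R = ∅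

/-- projection of a sequence onto a set of transitions -/
def proj (V : Set T) [DecidablePred (· ∈ V)] (σ : List T) : List T :=
  σ.filter (fun t => decide (t ∈ V))

lemma mem_postList {N : Net P T} {l : List T} {x : P} :
    x ∈ postList N l ↔ ∃ t ∈ l, x ∈ N.post t := by
  simp [postList]

lemma postList_mono {N : Net P T} {l l' : List T} (h : ∀ t ∈ l, t ∈ l') :
    postList N l ⊆ postList N l' := by
  intro x hx
  rw [mem_postList] at hx ⊢
  obtain ⟨t, ht, hxt⟩ := hx
  exact ⟨t, h t ht, hxt⟩

lemma pre_inter_empty {N : Net P T} {Q : Set P} {t : T} (h : t ∉ adjQ N Q) :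
    N.pre t ∩ Q = ∅ := by
  rw [Set.eq_empty_iff_forall_notMem]
  intro x hx
  exact h (Set.mem_union_right _ ⟨x, hx⟩)

lemma post_inter_empty {N : Net P T} {Q : Set P} {t : T} (h : t ∉ adjQ N Q) :
    N.post t ∩ Q = ∅ := by
  rw [Set.eq_empty_iff_forall_notMem]
  intro x hx
  exact h (Set.mem_union_left _ ⟨x, hx⟩)

lemma sep_symm {N : Net P T} {A B : Set P} (h : separated N A B) : separated N B A := by
  unfold separated at *
  rw [Set.inter_comm]; exact h

lemma sep_not_adj {N : Net P T} {A B : Set P} (h : separated N A B) {t : T}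
    (ht : t ∈ adjQ N A) : t ∉ adjQ N B := by
  intro hb
  have h2 : t ∈ adjQ N A ∩ adjQ N B := ⟨ht, hb⟩
  rw [h] at h2
  exact h2

lemma adjQ_union (N : Net P T) (A B : Set P) :
    adjQ N (A ∪ B) = adjQ N A ∪ adjQ N B := by
  ext t
  simp only [adjQ, preQ, postQ, Set.mem_union, Set.mem_setOf_eq,
    Set.inter_union_distrib_left, Set.union_nonempty]
  tauto

lemma pre_inter_union {N : Net P T} {A B : Set P} {t : T} (ht : t ∉ adjQ N B) :
    N.pre t ∩ (A ∪ B) = N.pre t ∩ A := by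
  rw [Set.inter_union_distrib_left, pre_inter_empty ht, Set.union_empty]

lemma post_inter_union {N : Net P T} {A B : Set P} {t : T} (ht : t ∉ adjQ N B) :
    N.post t ∩ (A ∪ B) = N.post t ∩ A := by
  rw [Set.inter_union_distrib_left, post_inter_empty ht, Set.union_empty]

lemma ins_union_iff {N : Net P T} {A B : Set P} {t : T} (ht : t ∉ adjQ N B) :
    t ∈ insQ N (A ∪ B) ↔ t ∈ insQ N A := by
  simp only [insQ, preQ, postQ, Set.mem_diff, Set.mem_setOf_eq,
    pre_inter_union (A := A) ht, post_inter_union (A := A) ht]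

lemma read_union_iff {N : Net P T} {A B : Set P} {t : T} (ht : t ∉ adjQ N B) :
    t ∈ readQ N (A ∪ B) ↔ t ∈ readQ N A := by
  simp only [readQ, Set.mem_setOf_eq, adjQ_union, Set.mem_union,
    pre_inter_union (A := A) ht, post_inter_union (A := A) ht]
  tauto

lemma read_pre_nonempty {N : Net P T} {Q : Set P} {t : T} (h : t ∈ readQ N Q) :
    (N.pre t ∩ Q).Nonempty := by
  obtain ⟨hadj, heq⟩ := h
  rcases hadj with h1 | h1
  · exact heq ▸ h1
  · exact h1

lemma postList_proj (N : Net P T) (Q : Set P) [DecidablePred (· ∈ adjQ N Q)] (l : List T) :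
    Q ∩ postList N l = Q ∩ postList N (proj (adjQ N Q) l) := by
  ext x
  simp only [Set.mem_inter_iff, mem_postList, proj, List.mem_filter, decide_eq_true_eq]
  constructor
  · rintro ⟨hxQ, t, ht, hxt⟩
    exact ⟨hxQ, t, ⟨ht, Set.mem_union_left _ ⟨x, hxt, hxQ⟩⟩, hxt⟩
  · rintro ⟨hxQ, t, ⟨ht, -⟩, hxt⟩
    exact ⟨hxQ, t, ht, hxt⟩

lemma filt_idx_of_idx (p : T → Bool) (σ : List T) (i : ℕ) (hi : i < σ.length)
    (hp : p σ[i] = true) :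
    ∃ hj : ((σ.take i).filter p).length < (σ.filter p).length,
      (σ.filter p)[((σ.take i).filter p).length] = σ[i] ∧
      (σ.filter p).take ((σ.take i).filter p).length = (σ.take i).filter p := by
  induction σ generalizing i with
  | nil => simp at hi
  | cons a rest ih =>
    cases i with
    | zero =>
      simp only [List.getElem_cons_zero] at hp ⊢
      simp [List.filter_cons, hp]
    | succ n =>
      simp only [List.getElem_cons_succ] at hp ⊢
      have hn : n < rest.length := by simpa using hi
      obtain ⟨hj, h1, h2⟩ := ih n hn hp
      by_cases ha : p a = true
      · simp only [List.take_succ_cons, List.filter_cons, ha, if_true, List.length_cons]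
        refine ⟨Nat.succ_lt_succ hj, ?_, ?_⟩
        · simpa using h1
        · simpa using h2
      · simp only [List.take_succ_cons, List.filter_cons, ha, if_false]
        exact ⟨hj, h1, h2⟩

lemma idx_of_filt_idx (p : T → Bool) (σ : List T) (j : ℕ) (hj : j < (σ.filter p).length) :
    ∃ i, ∃ hi : i < σ.length, p σ[i] = true ∧ σ[i] = (σ.filter p)[j] ∧
      (σ.take i).filter p = (σ.filter p).take j := by
  induction σ generalizing j with
  | nil => simp at hj
  | cons a rest ih =>
    by_cases ha : p a = true
    · cases j with
      | zero =>
        refine ⟨0, by simp, by simpa using ha, ?_, by simp⟩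
        simp [List.filter_cons, ha]
      | succ m =>
        have hm : m < (rest.filter p).length := by
          simp only [List.filter_cons, ha, if_true, List.length_cons] at hj; omega
        obtain ⟨i, hi, h1, h2, h3⟩ := ih m hm
        refine ⟨i + 1, by simpa using Nat.succ_lt_succ hi, by simpa using h1, ?_, ?_⟩
        · simp only [List.getElem_cons_succ, List.filter_cons, ha, if_true]
          simpa using h2
        · simp only [List.take_succ_cons, List.filter_cons, ha, if_true, List.take_succ_cons]
          simpa using h3
    · have hj' : j < (rest.filter p).length := by
        simpa [List.filter_cons, ha] using hj
      obtain ⟨i, hi, h1, h2, h3⟩ := ih j hj'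
      refine ⟨i + 1, by simpa using Nat.succ_lt_succ hi, by simpa using h1, ?_, ?_⟩
      · simp only [List.getElem_cons_succ, List.filter_cons, ha, if_false]
        simpa [List.filter_cons, ha] using h2
      · simp only [List.take_succ_cons, List.filter_cons, ha, if_false]
        exact h3

lemma proj_inSeq (N : Net P T) (A B : Set P) [DecidablePred (· ∈ adjQ N A)]
    (hsep : separated N A B) (σ : List T) (h : isInSeq N (A ∪ B) σ)
    (hne : proj (adjQ N A) σ ≠ []) : isInSeq N A (proj (adjQ N A) σ) := by
  classical
  obtain ⟨hne0, hmem, hhead, hiv⟩ := h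
  simp only [List.get_eq_getElem] at hiv
  set p : T → Bool := fun t => decide (t ∈ adjQ N A) with hp
  have hproj : ∀ l : List T, proj (adjQ N A) l = l.filter p := by
    intro l; rw [hp]; rfl
  rw [hproj] at hne
  have hgA : ∀ {t : T}, p t = true → t ∈ adjQ N A := by
    intro t ht; simpa [hp] using ht
  have hgB : ∀ {t : T}, p t = true → t ∉ adjQ N B := fun ht => sep_not_adj hsep (hgA ht)
  -- key: t at position j=0 of the filter is in insQ (A∪B)
  have key0 : ∀ i (hi : i < σ.length), p σ[i] = true → (σ.take i).filter p = [] →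
      σ[i] ∈ insQ N (A ∪ B) := by
    intro i hi hpi hfe
    rcases Nat.eq_zero_or_pos i with hi0 | hipos
    · subst hi0
      obtain ⟨s, l', hσe⟩ := List.exists_cons_of_ne_nil hne0
      have h0 : σ[0] = s := by simp only [hσe, List.getElem_cons_zero]
      rw [h0]
      exact hhead s (by rw [hσe]; rfl)
    · have htσ : σ[i] ∈ σ := List.getElem_mem hi
      rcases hmem _ htσ with h1 | h1
      · exact h1
      · exfalso
        have h2 : (N.pre σ[i] ∩ A).Nonempty := by
          have := read_pre_nonempty ((read_union_iff (hgB hpi)).mp h1)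
          exact this
        obtain ⟨x, hx1, hx2⟩ := h2
        have hx3 : x ∈ postList N (σ.take i) :=
          (hiv i hi hipos).1 ⟨Set.mem_union_left _ hx2, hx1⟩
        have hx4 : x ∈ A ∩ postList N (σ.take i) := ⟨hx2, hx3⟩
        rw [postList_proj N A, hproj, hfe] at hx4
        simp [postList] at hx4
  refine ⟨by rwa [hproj], ?_, ?_, ?_⟩
  · intro t ht
    rw [hproj, List.mem_filter] at ht
    obtain ⟨htσ, htp⟩ := ht
    rcases hmem t htσ with h1 | h1
    · exact Or.inl ((ins_union_iff (hgB htp)).mp h1)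
    · exact Or.inr ((read_union_iff (hgB htp)).mp h1)
  · intro t ht
    rw [Option.mem_def, hproj] at ht
    obtain ⟨a, l, he⟩ := List.exists_cons_of_ne_nil hne
    rw [he] at ht
    injection ht with ht
    subst ht
    have hlen : 0 < (σ.filter p).length := by rw [he]; simp
    obtain ⟨i, hi, hpi, h2, h3⟩ := idx_of_filt_idx p σ 0 hlen
    have h20 : σ[i] = a := by rw [h2]; simp only [he, List.getElem_cons_zero]
    have hkey := key0 i hi hpi (by simpa using h3)
    rw [h20] at hkey hpi
    exact (ins_union_iff (hgB hpi)).mp hkey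
  · intro j hj hjpos
    simp only [List.get_eq_getElem, hproj] at hj ⊢
    obtain ⟨i, hi, hpi, h2, h3⟩ := idx_of_filt_idx p σ j hj
    have hipos : 0 < i := by
      rcases Nat.eq_zero_or_pos i with h0 | h0
      · exfalso
        subst h0
        have : ((σ.filter p).take j).length = j := by
          rw [List.length_take]; omega
        rw [← h3] at this
        simp at this
        omega
      · exact h0
    obtain ⟨h1', h2'⟩ := hiv i hi hipos
    constructor
    · rintro x ⟨hxA, hxpre⟩
      rw [← h2] at hxpre
      have hx3 : x ∈ postList N (σ.take i) := h1' ⟨Set.mem_union_left _ hxA, hxpre⟩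
      have hx4 : x ∈ A ∩ postList N (σ.take i) := ⟨hxA, hx3⟩
      rw [postList_proj N A, hproj, h3] at hx4
      exact hx4.2
    · rw [Set.eq_empty_iff_forall_notMem]
      rintro x ⟨⟨hxA, hxp⟩, hxpl⟩
      rw [← h3] at hxpl
      have hx1 : x ∈ postList N (σ.take i) :=
        postList_mono (fun u hu => List.mem_of_mem_filter hu) hxpl
      rw [← h2] at hxp
      have hx2 : x ∈ (A ∪ B) ∩ (N.post σ[i] \ N.pre σ[i]) ∩ postList N (σ.take i) :=
        ⟨⟨Set.mem_union_left _ hxA, hxp⟩, hx1⟩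
      rw [h2'] at hx2
      exact hx2

lemma side_lemma (N : Net P T) (A B : Set P) [DecidablePred (· ∈ adjQ N A)]
    (hsep : separated N A B) (σ : List T)
    (hprojA : proj (adjQ N A) σ = [] ∨ isInSeq N A (proj (adjQ N A) σ)) :
    (∀ t ∈ σ, t ∈ adjQ N A → t ∈ insQ N (A ∪ B) ∪ readQ N (A ∪ B)) ∧
    (∀ (t : T) (rest : List T), σ = t :: rest → t ∈ adjQ N A → t ∈ insQ N (A ∪ B)) ∧
    (∀ i (hi : i < σ.length), 0 < i → σ[i] ∈ adjQ N A →
      (A ∪ B) ∩ N.pre σ[i] ⊆ postList N (σ.take i) ∧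
      (A ∪ B) ∩ (N.post σ[i] \ N.pre σ[i]) ∩ postList N (σ.take i) = ∅) := by
  classical
  set p : T → Bool := fun t => decide (t ∈ adjQ N A) with hp
  have hproj : ∀ l : List T, proj (adjQ N A) l = l.filter p := by intro l; rw [hp]; rfl
  rw [hproj] at hprojA
  have hpt : ∀ {t : T}, t ∈ adjQ N A → p t = true := by
    intro t ht; simp [hp, ht]
  refine ⟨?_, ?_, ?_⟩
  · intro t ht htA
    have htf : t ∈ σ.filter p := List.mem_filter.mpr ⟨ht, hpt htA⟩
    have hne : σ.filter p ≠ [] := fun h0 => by simp [h0] at htf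
    rcases hprojA with h0 | hin
    · exact absurd h0 hne
    · have htB := sep_not_adj hsep htA
      rcases hin.2.1 t htf with h1 | h1
      · exact Or.inl ((ins_union_iff htB).mpr h1)
      · exact Or.inr ((read_union_iff htB).mpr h1)
  · intro t rest hσe htA
    have hfe : σ.filter p = t :: rest.filter p := by
      rw [hσe]; simp [List.filter_cons, hpt htA]
    rcases hprojA with h0 | hin
    · rw [h0] at hfe; exact absurd hfe.symm (List.cons_ne_nil _ _)
    · have hh := hin.2.2.1 t (by rw [hfe]; rfl)
      exact (ins_union_iff (sep_not_adj hsep htA)).mpr hh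
  · intro i hi hipos htA
    obtain ⟨hj, h1, h2⟩ := filt_idx_of_idx p σ i hi (hpt htA)
    rcases hprojA with h0 | hin
    · rw [h0] at hj; simp at hj
    · obtain ⟨-, -, hhead, hiv⟩ := hin
      simp only [List.get_eq_getElem] at hiv
      have htB := sep_not_adj hsep htA
      have hpreB : N.pre σ[i] ∩ B = ∅ := pre_inter_empty htB
      have hpostB : N.post σ[i] ∩ B = ∅ := post_inter_empty htB
      have hsubA : A ∩ N.pre σ[i] ⊆ postList N ((σ.take i).filter p) := by
        rcases Nat.eq_zero_or_pos ((σ.take i).filter p).length with hj0 | hjpos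
        · have hfe0 : (σ.take i).filter p = [] := List.length_eq_zero_iff.mp hj0
          simp only [hfe0, List.length_nil] at h1 hj
          have hh : (σ.filter p).head? = some σ[i] := by
            rw [List.head?_eq_getElem?, List.getElem?_eq_getElem hj]
            exact congrArg some h1
          have hins := hhead σ[i] (Option.mem_def.mpr hh)
          intro x hx
          exact (hins.2 ⟨x, hx.2, hx.1⟩).elim
        · obtain ⟨g1, g2⟩ := hiv ((σ.take i).filter p).length hj hjpos
          rw [h1, h2] at g1
          exact g1
      have hempA : A ∩ (N.post σ[i] \ N.pre σ[i]) ∩ postList N ((σ.take i).filter p) = ∅ := by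
        rcases Nat.eq_zero_or_pos ((σ.take i).filter p).length with hj0 | hjpos
        · have hfe0 : (σ.take i).filter p = [] := List.length_eq_zero_iff.mp hj0
          rw [hfe0]
          simp [postList]
        · obtain ⟨g1, g2⟩ := hiv ((σ.take i).filter p).length hj hjpos
          rw [h1, h2] at g2
          exact g2
      constructor
      · rintro x ⟨hxU, hxpre⟩
        have hxA : x ∈ A := by
          rcases hxU with h | h
          · exact h
          · have hxB : x ∈ N.pre σ[i] ∩ B := ⟨hxpre, h⟩
            rw [hpreB] at hxB
            exact absurd hxB (Set.notMem_empty x)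
        exact postList_mono (fun u hu => List.mem_of_mem_filter hu) (hsubA ⟨hxA, hxpre⟩)
      · rw [Set.eq_empty_iff_forall_notMem]
        rintro x ⟨⟨hxU, hxpp⟩, hxpl⟩
        have hxA : x ∈ A := by
          rcases hxU with h | h
          · exact h
          · have hxB : x ∈ N.post σ[i] ∩ B := ⟨hxpp.1, h⟩
            rw [hpostB] at hxB
            exact absurd hxB (Set.notMem_empty x)
        have hx4 : x ∈ A ∩ postList N (σ.take i) := ⟨hxA, hxpl⟩
        rw [postList_proj N A, hproj] at hx4
        have : x ∈ A ∩ (N.post σ[i] \ N.pre σ[i]) ∩ postList N ((σ.take i).filter p) :=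
          ⟨⟨hxA, hxpp⟩, hx4.2⟩
        rw [hempA] at this
        exact this

/-- characterisation of the (complete) in-sequences of the union of two
separated distributed places with nonempty `ins` sets, via projections. -/
theorem stmt7 (N : Net P T) (A B : Set P)
    [DecidablePred (· ∈ adjQ N A)] [DecidablePred (· ∈ adjQ N B)]
    (hA : distPlace N A) (hB : distPlace N B)
    (hsep : separated N A B) (hdisj : Disjoint A B)
    (hinsA : (insQ N A).Nonempty) (hinsB : (insQ N B).Nonempty)
    (σ : List T) (hσ : ∀ t ∈ σ, t ∈ adjQ N (A ∪ B)) :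
    (isInSeq N (A ∪ B) σ ↔
      σ ≠ [] ∧
      (proj (adjQ N A) σ = [] ∨ isInSeq N A (proj (adjQ N A) σ)) ∧
      (proj (adjQ N B) σ = [] ∨ isInSeq N B (proj (adjQ N B) σ))) ∧
    (isCInSeq N (A ∪ B) σ ↔
      σ ≠ [] ∧
      isCInSeq N A (proj (adjQ N A) σ) ∧
      isCInSeq N B (proj (adjQ N B) σ)) := by
  classical
  have hAcomm : isInSeq N (B ∪ A) σ ↔ isInSeq N (A ∪ B) σ := by rw [Set.union_comm]
  have main : isInSeq N (A ∪ B) σ ↔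
      σ ≠ [] ∧
      (proj (adjQ N A) σ = [] ∨ isInSeq N A (proj (adjQ N A) σ)) ∧
      (proj (adjQ N B) σ = [] ∨ isInSeq N B (proj (adjQ N B) σ)) := by
    constructor
    · intro h
      refine ⟨h.1, ?_, ?_⟩
      · by_cases h0 : proj (adjQ N A) σ = []
        · exact Or.inl h0
        · exact Or.inr (proj_inSeq N A B hsep σ h h0)
      · by_cases h0 : proj (adjQ N B) σ = []
        · exact Or.inl h0
        · exact Or.inr (proj_inSeq N B A (sep_symm hsep) σ (hAcomm.mpr h) h0)
    · rintro ⟨hne, hpA, hpB⟩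
      obtain ⟨c1A, c2A, c3A⟩ := side_lemma N A B hsep σ hpA
      obtain ⟨c1B, c2B, c3B⟩ := side_lemma N B A (sep_symm hsep) σ hpB
      rw [Set.union_comm B A] at c1B c2B c3B
      have hclass : ∀ t ∈ σ, t ∈ adjQ N A ∨ t ∈ adjQ N B := by
        intro t ht
        have h := hσ t ht
        rw [adjQ_union] at h
        exact h
      refine ⟨hne, ?_, ?_, ?_⟩
      · intro t ht
        rcases hclass t ht with h | h
        · exact c1A t ht h
        · exact c1B t ht h
      · intro t ht
        rw [Option.mem_def] at ht
        obtain ⟨a, rest, he⟩ := List.exists_cons_of_ne_nil hne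
        rw [he] at ht
        injection ht with ht
        subst ht
        have haσ : a ∈ σ := by rw [he]; exact List.mem_cons_self
        rcases hclass a haσ with h | h
        · exact c2A a rest he h
        · exact c2B a rest he h
      · intro i hiL hipos
        simp only [List.get_eq_getElem]
        have hmemi : σ[i] ∈ σ := List.getElem_mem hiL
        rcases hclass σ[i] hmemi with h | h
        · exact c3A i hiL hipos h
        · exact c3B i hiL hipos h
  refine ⟨main, ?_⟩
  constructor
  · rintro ⟨hin, hcov⟩
    obtain ⟨hne, hpA, hpB⟩ := main.mp hin
    have hAsub : A ⊆ postList N (proj (adjQ N A) σ) := by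
      intro x hx
      have hx2 : x ∈ A ∩ postList N σ := ⟨hx, hcov (Set.mem_union_left _ hx)⟩
      rw [postList_proj N A] at hx2
      exact hx2.2
    have hBsub : B ⊆ postList N (proj (adjQ N B) σ) := by
      intro x hx
      have hx2 : x ∈ B ∩ postList N σ := ⟨hx, hcov (Set.mem_union_right _ hx)⟩
      rw [postList_proj N B] at hx2
      exact hx2.2
    have hAne : proj (adjQ N A) σ ≠ [] := by
      intro h0
      obtain ⟨x, hx⟩ := hA.1
      have hx2 := hAsub hx
      rw [h0] at hx2
      simp [postList] at hx2
    have hBne : proj (adjQ N B) σ ≠ [] := by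
      intro h0
      obtain ⟨x, hx⟩ := hB.1
      have hx2 := hBsub hx
      rw [h0] at hx2
      simp [postList] at hx2
    exact ⟨hne, ⟨hpA.resolve_left hAne, hAsub⟩, ⟨hpB.resolve_left hBne, hBsub⟩⟩
  · rintro ⟨hne, ⟨hinA, hcovA⟩, ⟨hinB, hcovB⟩⟩
    refine ⟨main.mpr ⟨hne, Or.inr hinA, Or.inr hinB⟩, ?_⟩
    rintro x (hx | hx)
    · exact postList_mono (fun u hu => List.mem_of_mem_filter hu) (hcovA hx)
    · exact postList_mono (fun u hu => List.mem_of_mem_filter hu) (hcovB hx)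
end

section
/- If P and P' are separated pure distributed places, then P ⊗ P' is a pure distributed place whose in-sequences are the union of the in-sequences of P and P', and whose complete in-sequences are the union of the complete in-sequences of P and P'. -/
open Set

variable {P T : Type}

/-- tagged transitions `t^in` / `t^out` identifying places -/
inductive Tag (T : Type) where
  | inp : T → Tag T
  | out : T → Tag T

/-- the net whose places are identified with their sets of tagged adjacent
transitions: `(t, π_Z) ∈ Fl` iff `t^in ∈ Z` and `(π_Z, t) ∈ Fl` iff `t^out ∈ Z`. -/
def tagNet (T : Type) : Net (Set (Tag T)) T where
  pre t := {Z | Tag.out t ∈ Z}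
  post t := {Z | Tag.inp t ∈ Z}
  minit := ∅

/-- cross-product of sets of tagged places -/
def cross {T : Type} (Q R : Set (Set (Tag T))) : Set (Set (Tag T)) :=
  {W | ∃ Z ∈ Q, ∃ Z' ∈ R, W = Z ∪ Z'}


section Stmt13Aux

variable {T : Type}

lemma pure_disj {P T : Type} {N : Net P T} {Q : Set P} (hp : pureDP N Q) :
    ∀ t, t ∈ postQ N Q → t ∈ preQ N Q → False := fun t h1 h2 =>
  Set.eq_empty_iff_forall_notMem.mp hp t ⟨h1, h2⟩

lemma readQ_pure {P T : Type} {N : Net P T} {Q : Set P} (hp : pureDP N Q) :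
    readQ N Q = ∅ := by
  ext t
  simp only [readQ, Set.mem_setOf_eq, Set.mem_empty_iff_false, iff_false, not_and]
  rintro (hpre | hpost) heq
  · exact pure_disj hp t (by rw [postQ, Set.mem_setOf_eq, heq]; exact hpre) hpre
  · exact pure_disj hp t hpost (by rw [preQ, Set.mem_setOf_eq, ← heq]; exact hpost)

lemma insQ_pure {P T : Type} {N : Net P T} {Q : Set P} (hp : pureDP N Q) :
    insQ N Q = preQ N Q := by
  ext t
  exact ⟨fun h => h.1, fun h => ⟨h, fun hpost => pure_disj hp t hpost h⟩⟩

lemma remQ_pure {P T : Type} {N : Net P T} {Q : Set P} (hp : pureDP N Q) :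
    remQ N Q = postQ N Q := by
  ext t
  exact ⟨fun h => h.1, fun h => ⟨h, fun hpre => pure_disj hp t h hpre⟩⟩

lemma inSeq_all {P T : Type} {N : Net P T} {Q : Set P} {σ : List T}
    (hp : pureDP N Q) (h : isInSeq N Q σ) : ∀ t ∈ σ, t ∈ insQ N Q := by
  intro t ht
  rcases h.2.1 t ht with h' | h'
  · exact h'
  · rw [readQ_pure hp] at h'; exact absurd h' (Set.notMem_empty t)

lemma outSeq_all {P T : Type} {N : Net P T} {Q : Set P} {σ : List T}
    (hp : pureDP N Q) (h : isOutSeq N Q σ) : ∀ t ∈ σ, t ∈ remQ N Q := by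
  intro t ht
  rcases h.2.1 t ht with h' | h'
  · exact h'
  · rw [readQ_pure hp] at h'; exact absurd h' (Set.notMem_empty t)

lemma mem_postList_iff {P T : Type} {N : Net P T} {l : List T} {W : P} :
    W ∈ postList N l ↔ ∃ t ∈ l, W ∈ N.post t := by
  simp [postList]

lemma mem_epreList_iff {P T : Type} {N : Net P T} {l : List T} {W : P} :
    W ∈ epreList N l ↔ ∃ t ∈ l, W ∈ N.pre t ∧ W ∉ N.post t := by
  simp [epreList]
  tauto

lemma mem_preQ_iff {Q : Set (Set (Tag T))} {t : T} :
    t ∈ preQ (tagNet T) Q ↔ ∃ Z ∈ Q, Tag.inp t ∈ Z := by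
  constructor
  · rintro ⟨Z, h1, h2⟩; exact ⟨Z, h2, h1⟩
  · rintro ⟨Z, h1, h2⟩; exact ⟨Z, h2, h1⟩

lemma mem_postQ_iff {Q : Set (Set (Tag T))} {t : T} :
    t ∈ postQ (tagNet T) Q ↔ ∃ Z ∈ Q, Tag.out t ∈ Z := by
  constructor
  · rintro ⟨Z, h1, h2⟩; exact ⟨Z, h2, h1⟩
  · rintro ⟨Z, h1, h2⟩; exact ⟨Z, h2, h1⟩

lemma adj_of_inp {Q : Set (Set (Tag T))} {t : T} {Z : Set (Tag T)}
    (hZ : Z ∈ Q) (h : Tag.inp t ∈ Z) : t ∈ adjQ (tagNet T) Q :=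
  Set.mem_union_left _ (mem_preQ_iff.mpr ⟨Z, hZ, h⟩)

lemma adj_of_out {Q : Set (Set (Tag T))} {t : T} {Z : Set (Tag T)}
    (hZ : Z ∈ Q) (h : Tag.out t ∈ Z) : t ∈ adjQ (tagNet T) Q :=
  Set.mem_union_right _ (mem_postQ_iff.mpr ⟨Z, hZ, h⟩)

lemma insQ_adj {P T : Type} {N : Net P T} {Q : Set P} {t : T}
    (h : t ∈ insQ N Q) : t ∈ adjQ N Q := Set.mem_union_left _ h.1

lemma remQ_adj {P T : Type} {N : Net P T} {Q : Set P} {t : T}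
    (h : t ∈ remQ N Q) : t ∈ adjQ N Q := Set.mem_union_right _ h.1

lemma sep_disj {A B : Set (Set (Tag T))} (hsep : separated (tagNet T) A B) :
    ∀ t, t ∈ adjQ (tagNet T) A → t ∈ adjQ (tagNet T) B → False := fun t h1 h2 =>
  Set.eq_empty_iff_forall_notMem.mp hsep t ⟨h1, h2⟩

lemma separated_symm {P T : Type} {N : Net P T} {Q R : Set P}
    (h : separated N Q R) : separated N R Q := by
  unfold separated at *
  rw [Set.inter_comm]; exact h

lemma sep_not_inp {A B : Set (Set (Tag T))} (hsep : separated (tagNet T) A B)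
    {t : T} {Z' : Set (Tag T)} (ht : t ∈ adjQ (tagNet T) A) (hZ' : Z' ∈ B) :
    Tag.inp t ∉ Z' := fun h => sep_disj hsep t ht (adj_of_inp hZ' h)

lemma sep_not_out {A B : Set (Set (Tag T))} (hsep : separated (tagNet T) A B)
    {t : T} {Z' : Set (Tag T)} (ht : t ∈ adjQ (tagNet T) A) (hZ' : Z' ∈ B) :
    Tag.out t ∉ Z' := fun h => sep_disj hsep t ht (adj_of_out hZ' h)

lemma pure_no_out {A : Set (Set (Tag T))} (hpA : pureDP (tagNet T) A)
    {t : T} {Z : Set (Tag T)} (ht : t ∈ preQ (tagNet T) A) (hZ : Z ∈ A) :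
    Tag.out t ∉ Z := fun h => pure_disj hpA t (mem_postQ_iff.mpr ⟨Z, hZ, h⟩) ht

lemma pure_no_inp {A : Set (Set (Tag T))} (hpA : pureDP (tagNet T) A)
    {t : T} {Z : Set (Tag T)} (ht : t ∈ postQ (tagNet T) A) (hZ : Z ∈ A) :
    Tag.inp t ∉ Z := fun h => pure_disj hpA t ht (mem_preQ_iff.mpr ⟨Z, hZ, h⟩)

lemma not_inp_of_not_preQ {A : Set (Set (Tag T))} {t : T} {Z : Set (Tag T)}
    (hn : t ∉ preQ (tagNet T) A) (hZ : Z ∈ A) : Tag.inp t ∉ Z :=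
  fun h => hn (mem_preQ_iff.mpr ⟨Z, hZ, h⟩)

lemma not_out_of_not_postQ {A : Set (Set (Tag T))} {t : T} {Z : Set (Tag T)}
    (hn : t ∉ postQ (tagNet T) A) (hZ : Z ∈ A) : Tag.out t ∉ Z :=
  fun h => hn (mem_postQ_iff.mpr ⟨Z, hZ, h⟩)

lemma cross_comm {A B : Set (Set (Tag T))} : cross A B = cross B A := by
  ext W
  constructor <;> rintro ⟨Z, hZ, Z', hZ', rfl⟩ <;>
    exact ⟨Z', hZ', Z, hZ, (Set.union_comm _ _)⟩

lemma preQ_cross {A B : Set (Set (Tag T))} (hAne : A.Nonempty) (hBne : B.Nonempty) :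
    preQ (tagNet T) (cross A B) = preQ (tagNet T) A ∪ preQ (tagNet T) B := by
  ext t
  rw [Set.mem_union, mem_preQ_iff, mem_preQ_iff, mem_preQ_iff]
  constructor
  · rintro ⟨W, ⟨Z, hZ, Z', hZ', rfl⟩, (h | h)⟩
    · exact Or.inl ⟨Z, hZ, h⟩
    · exact Or.inr ⟨Z', hZ', h⟩
  · rintro (⟨Z, hZ, h⟩ | ⟨Z', hZ', h⟩)
    · obtain ⟨Z', hZ'⟩ := hBne
      exact ⟨Z ∪ Z', ⟨Z, hZ, Z', hZ', rfl⟩, Or.inl h⟩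
    · obtain ⟨Z, hZ⟩ := hAne
      exact ⟨Z ∪ Z', ⟨Z, hZ, Z', hZ', rfl⟩, Or.inr h⟩

lemma postQ_cross {A B : Set (Set (Tag T))} (hAne : A.Nonempty) (hBne : B.Nonempty) :
    postQ (tagNet T) (cross A B) = postQ (tagNet T) A ∪ postQ (tagNet T) B := by
  ext t
  rw [Set.mem_union, mem_postQ_iff, mem_postQ_iff, mem_postQ_iff]
  constructor
  · rintro ⟨W, ⟨Z, hZ, Z', hZ', rfl⟩, (h | h)⟩
    · exact Or.inl ⟨Z, hZ, h⟩
    · exact Or.inr ⟨Z', hZ', h⟩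
  · rintro (⟨Z, hZ, h⟩ | ⟨Z', hZ', h⟩)
    · obtain ⟨Z', hZ'⟩ := hBne
      exact ⟨Z ∪ Z', ⟨Z, hZ, Z', hZ', rfl⟩, Or.inl h⟩
    · obtain ⟨Z, hZ⟩ := hAne
      exact ⟨Z ∪ Z', ⟨Z, hZ, Z', hZ', rfl⟩, Or.inr h⟩

lemma pure_cross {A B : Set (Set (Tag T))} (hAne : A.Nonempty) (hBne : B.Nonempty)
    (hpA : pureDP (tagNet T) A) (hpB : pureDP (tagNet T) B)
    (hsep : separated (tagNet T) A B) : pureDP (tagNet T) (cross A B) := by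
  unfold pureDP
  rw [preQ_cross hAne hBne, postQ_cross hAne hBne]
  apply Set.eq_empty_iff_forall_notMem.mpr
  rintro t ⟨h1 | h1, h2 | h2⟩
  · exact pure_disj hpA t h1 h2
  · exact sep_disj hsep t (Set.mem_union_right _ h1) (Set.mem_union_left _ h2)
  · exact sep_disj hsep t (Set.mem_union_left _ h2) (Set.mem_union_right _ h1)
  · exact pure_disj hpB t h1 h2

lemma insQ_cross {A B : Set (Set (Tag T))} (hAne : A.Nonempty) (hBne : B.Nonempty)
    (hpA : pureDP (tagNet T) A) (hpB : pureDP (tagNet T) B)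
    (hsep : separated (tagNet T) A B) :
    insQ (tagNet T) (cross A B) = insQ (tagNet T) A ∪ insQ (tagNet T) B := by
  rw [insQ_pure (pure_cross hAne hBne hpA hpB hsep), insQ_pure hpA, insQ_pure hpB,
    preQ_cross hAne hBne]

lemma remQ_cross {A B : Set (Set (Tag T))} (hAne : A.Nonempty) (hBne : B.Nonempty)
    (hpA : pureDP (tagNet T) A) (hpB : pureDP (tagNet T) B)
    (hsep : separated (tagNet T) A B) :
    remQ (tagNet T) (cross A B) = remQ (tagNet T) A ∪ remQ (tagNet T) B := by
  rw [remQ_pure (pure_cross hAne hBne hpA hpB hsep), remQ_pure hpA, remQ_pure hpB,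
    postQ_cross hAne hBne]


@[simp] lemma mem_pre_tag {t : T} {W : Set (Tag T)} :
    W ∈ (tagNet T).pre t ↔ Tag.out t ∈ W := Iff.rfl

@[simp] lemma mem_post_tag {t : T} {W : Set (Tag T)} :
    W ∈ (tagNet T).post t ↔ Tag.inp t ∈ W := Iff.rfl

lemma head_mem_take {α : Type*} {σ : List α} {h0 : α} (hh : σ.head? = some h0)
    {i : ℕ} (hi : 0 < i) : h0 ∈ σ.take i := by
  cases σ with
  | nil => simp at hh
  | cons a l =>
    obtain ⟨j, rfl⟩ : ∃ j, i = j + 1 := ⟨i - 1, (Nat.succ_pred_eq_of_pos hi).symm⟩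
    obtain rfl : a = h0 := by simpa using hh
    simp [List.take_succ_cons]

lemma get_zero_of_head? {α : Type*} {l : List α} {a : α} (hh : l.head? = some a)
    (h : 0 < l.length) : l.get ⟨0, h⟩ = a := by
  cases l with
  | nil => simp at hh
  | cons b t => simpa using hh

lemma inSeq_C_to_A {A B : Set (Set (Tag T))} (hAne : A.Nonempty) (hBne : B.Nonempty)
    (hpA : pureDP (tagNet T) A) (hpB : pureDP (tagNet T) B)
    (hsep : separated (tagNet T) A B) {σ : List T} {h0 : T}
    (hσ : isInSeq (tagNet T) (cross A B) σ) (hh : σ.head? = some h0)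
    (hhA : h0 ∈ insQ (tagNet T) A) :
    isInSeq (tagNet T) A σ := by
  obtain ⟨hne, hall, hhead, hcond⟩ := hσ
  have hpC := pure_cross hAne hBne hpA hpB hsep
  have hallC : ∀ t ∈ σ, t ∈ insQ (tagNet T) A ∪ insQ (tagNet T) B := by
    intro t ht
    rcases hall t ht with h | h
    · rw [insQ_cross hAne hBne hpA hpB hsep] at h; exact h
    · rw [readQ_pure hpC] at h; exact absurd h (Set.notMem_empty t)
  obtain ⟨Z0, hZ0, hinh0⟩ := mem_preQ_iff.mp hhA.1
  have hallA : ∀ t ∈ σ, t ∈ insQ (tagNet T) A := by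
    intro t ht
    rcases hallC t ht with h | h
    · exact h
    · exfalso
      obtain ⟨⟨i, hi⟩, rfl⟩ := List.mem_iff_get.mp ht
      have hipos : 0 < i := by
        rcases Nat.eq_zero_or_pos i with rfl | hp
        · have hB : h0 ∈ insQ (tagNet T) B := by rwa [get_zero_of_head? hh hi] at h
          exact absurd trivial (fun _ => sep_disj hsep h0 (insQ_adj hhA) (insQ_adj hB))
        · exact hp
      obtain ⟨Z', hZ', hinp'⟩ := mem_preQ_iff.mp h.1
      have hout : Tag.out (σ.get ⟨i, hi⟩) ∉ Z0 ∪ Z' := by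
        rintro (hc | hc)
        · exact sep_disj hsep _ (adj_of_out hZ0 hc) (insQ_adj h)
        · exact pure_no_out hpB h.1 hZ' hc
      exact Set.eq_empty_iff_forall_notMem.mp (hcond i hi hipos).2 (Z0 ∪ Z')
        ⟨⟨⟨Z0, hZ0, Z', hZ', rfl⟩, Set.mem_union_right _ hinp', hout⟩,
          mem_postList_iff.mpr ⟨h0, head_mem_take hh hipos,
            mem_post_tag.mpr (Set.mem_union_left _ hinh0)⟩⟩
  refine ⟨hne, fun t ht => Or.inl (hallA t ht), ?_, ?_⟩
  · intro t ht
    rw [hh] at ht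
    obtain rfl : h0 = t := by simpa using ht
    exact hhA
  · intro i hi hpos
    have hgA : σ.get ⟨i, hi⟩ ∈ insQ (tagNet T) A := hallA _ (σ.get_mem _)
    constructor
    · rintro Z ⟨hZ, hout⟩
      exact absurd (mem_pre_tag.mp hout) (pure_no_out hpA hgA.1 hZ)
    · apply Set.eq_empty_iff_forall_notMem.mpr
      rintro Z ⟨⟨hZ, hinp, -⟩, hpl⟩
      obtain ⟨u, hu, hinpu⟩ := mem_postList_iff.mp hpl
      obtain ⟨Z', hZ'⟩ := hBne
      have houtC : Tag.out (σ.get ⟨i, hi⟩) ∉ Z ∪ Z' := by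
        rintro (hc | hc)
        · exact pure_no_out hpA hgA.1 hZ hc
        · exact sep_not_out hsep (insQ_adj hgA) hZ' hc
      exact Set.eq_empty_iff_forall_notMem.mp (hcond i hi hpos).2 (Z ∪ Z')
        ⟨⟨⟨Z, hZ, Z', hZ', rfl⟩,
            mem_post_tag.mpr (Set.mem_union_left _ (mem_post_tag.mp hinp)), houtC⟩,
          mem_postList_iff.mpr ⟨u, hu,
            mem_post_tag.mpr (Set.mem_union_left _ (mem_post_tag.mp hinpu))⟩⟩

lemma inSeq_A_to_C {A B : Set (Set (Tag T))} (hAne : A.Nonempty) (hBne : B.Nonempty)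
    (hpA : pureDP (tagNet T) A) (hpB : pureDP (tagNet T) B)
    (hsep : separated (tagNet T) A B) {σ : List T}
    (hσ : isInSeq (tagNet T) A σ) :
    isInSeq (tagNet T) (cross A B) σ := by
  obtain ⟨hne, hall, hhead, hcond⟩ := hσ
  have hallA : ∀ t ∈ σ, t ∈ insQ (tagNet T) A :=
    inSeq_all hpA ⟨hne, hall, hhead, hcond⟩
  refine ⟨hne, ?_, ?_, ?_⟩
  · intro t ht
    exact Or.inl (by
      rw [insQ_cross hAne hBne hpA hpB hsep]; exact Or.inl (hallA t ht))
  · intro t ht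
    rw [insQ_cross hAne hBne hpA hpB hsep]
    exact Or.inl (hhead t ht)
  · intro i hi hpos
    have hgA : σ.get ⟨i, hi⟩ ∈ insQ (tagNet T) A := hallA _ (σ.get_mem _)
    constructor
    · rintro W ⟨⟨Z, hZ, Z', hZ', rfl⟩, hout⟩
      exfalso
      rcases mem_pre_tag.mp hout with hc | hc
      · exact pure_no_out hpA hgA.1 hZ hc
      · exact sep_not_out hsep (insQ_adj hgA) hZ' hc
    · apply Set.eq_empty_iff_forall_notMem.mpr
      rintro W ⟨⟨⟨Z, hZ, Z', hZ', rfl⟩, hinp, -⟩, hpl⟩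
      obtain ⟨u, hu, hinpu⟩ := mem_postList_iff.mp hpl
      have huσ : u ∈ σ := List.take_subset _ _ hu
      have h1 : Tag.inp (σ.get ⟨i, hi⟩) ∈ Z := by
        rcases mem_post_tag.mp hinp with hc | hc
        · exact hc
        · exact absurd hc (sep_not_inp hsep (insQ_adj hgA) hZ')
      have h2 : Tag.inp u ∈ Z := by
        rcases mem_post_tag.mp hinpu with hc | hc
        · exact hc
        · exact absurd hc (sep_not_inp hsep (insQ_adj (hallA u huσ)) hZ')
      exact Set.eq_empty_iff_forall_notMem.mp (hcond i hi hpos).2 Z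
        ⟨⟨hZ, h1, pure_no_out hpA hgA.1 hZ⟩, mem_postList_iff.mpr ⟨u, hu, h2⟩⟩

lemma cov_A_to_C {A B : Set (Set (Tag T))} {σ : List T}
    (h : A ⊆ postList (tagNet T) σ) :
    cross A B ⊆ postList (tagNet T) σ := by
  rintro W ⟨Z, hZ, Z', hZ', rfl⟩
  obtain ⟨t, ht, hinp⟩ := mem_postList_iff.mp (h hZ)
  exact mem_postList_iff.mpr
    ⟨t, ht, mem_post_tag.mpr (Set.mem_union_left _ (mem_post_tag.mp hinp))⟩

lemma cov_C_to_A {A B : Set (Set (Tag T))} (hBne : B.Nonempty)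
    (hsep : separated (tagNet T) A B) {σ : List T}
    (hallA : ∀ t ∈ σ, t ∈ adjQ (tagNet T) A)
    (h : cross A B ⊆ postList (tagNet T) σ) : A ⊆ postList (tagNet T) σ := by
  intro Z hZ
  obtain ⟨Z', hZ'⟩ := hBne
  obtain ⟨t, ht, hinp⟩ := mem_postList_iff.mp (h ⟨Z, hZ, Z', hZ', rfl⟩)
  have hZt : Tag.inp t ∈ Z := by
    rcases mem_post_tag.mp hinp with hc | hc
    · exact hc
    · exact absurd hc (sep_not_inp hsep (hallA t ht) hZ')
  exact mem_postList_iff.mpr ⟨t, ht, hZt⟩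

lemma outSeq_C_to_A {A B : Set (Set (Tag T))} (hAne : A.Nonempty) (hBne : B.Nonempty)
    (hpA : pureDP (tagNet T) A) (hpB : pureDP (tagNet T) B)
    (hsep : separated (tagNet T) A B) {σ : List T} {h0 : T}
    (hσ : isOutSeq (tagNet T) (cross A B) σ) (hh : σ.head? = some h0)
    (hhA : h0 ∈ remQ (tagNet T) A) :
    isOutSeq (tagNet T) A σ := by
  obtain ⟨hne, hall, hhead, hcond⟩ := hσ
  have hpC := pure_cross hAne hBne hpA hpB hsep
  have hallC : ∀ t ∈ σ, t ∈ remQ (tagNet T) A ∪ remQ (tagNet T) B := by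
    intro t ht
    rcases hall t ht with h | h
    · rw [remQ_cross hAne hBne hpA hpB hsep] at h; exact h
    · rw [readQ_pure hpC] at h; exact absurd h (Set.notMem_empty t)
  obtain ⟨Z0, hZ0, houth0⟩ := mem_postQ_iff.mp hhA.1
  have hallA : ∀ t ∈ σ, t ∈ remQ (tagNet T) A := by
    intro t ht
    rcases hallC t ht with h | h
    · exact h
    · exfalso
      obtain ⟨⟨i, hi⟩, rfl⟩ := List.mem_iff_get.mp ht
      have hipos : 0 < i := by
        rcases Nat.eq_zero_or_pos i with rfl | hp
        · have hB : h0 ∈ remQ (tagNet T) B := by rwa [get_zero_of_head? hh hi] at h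
          exact absurd trivial (fun _ => sep_disj hsep h0 (remQ_adj hhA) (remQ_adj hB))
        · exact hp
      obtain ⟨Z', hZ', hout'⟩ := mem_postQ_iff.mp h.1
      have hmem : (Z0 ∪ Z') ∈ cross A B ∩ (tagNet T).pre (σ.get ⟨i, hi⟩) :=
        ⟨⟨Z0, hZ0, Z', hZ', rfl⟩, mem_pre_tag.mpr (Set.mem_union_right _ hout')⟩
      apply (hcond i hi hipos hmem).2
      refine mem_epreList_iff.mpr ⟨h0, head_mem_take hh hipos,
        mem_pre_tag.mpr (Set.mem_union_left _ houth0), ?_⟩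
      intro hc
      rcases mem_post_tag.mp hc with hc' | hc'
      · exact not_inp_of_not_preQ hhA.2 hZ0 hc'
      · exact sep_not_inp hsep (remQ_adj hhA) hZ' hc'
  refine ⟨hne, fun t ht => Or.inl (hallA t ht), ?_, ?_⟩
  · intro t ht
    rw [hh] at ht
    obtain rfl : h0 = t := by simpa using ht
    exact hhA
  · intro i hi hpos
    have hgA : σ.get ⟨i, hi⟩ ∈ remQ (tagNet T) A := hallA _ (σ.get_mem _)
    rintro Z ⟨hZ, hout⟩
    refine ⟨hZ, ?_⟩
    intro hep
    obtain ⟨u, hu, houtu, hninpu⟩ := mem_epreList_iff.mp hep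
    obtain ⟨Z', hZ'⟩ := hBne
    have huσ : u ∈ σ := List.take_subset _ _ hu
    have hmem : (Z ∪ Z') ∈ cross A B ∩ (tagNet T).pre (σ.get ⟨i, hi⟩) :=
      ⟨⟨Z, hZ, Z', hZ', rfl⟩,
        mem_pre_tag.mpr (Set.mem_union_left _ (mem_pre_tag.mp hout))⟩
    apply (hcond i hi hpos hmem).2
    refine mem_epreList_iff.mpr ⟨u, hu,
      mem_pre_tag.mpr (Set.mem_union_left _ (mem_pre_tag.mp houtu)), ?_⟩
    intro hc
    rcases mem_post_tag.mp hc with hc' | hc'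
    · exact not_inp_of_not_preQ (hallA u huσ).2 hZ hc'
    · exact sep_not_inp hsep (remQ_adj (hallA u huσ)) hZ' hc'

lemma outSeq_A_to_C {A B : Set (Set (Tag T))} (hAne : A.Nonempty) (hBne : B.Nonempty)
    (hpA : pureDP (tagNet T) A) (hpB : pureDP (tagNet T) B)
    (hsep : separated (tagNet T) A B) {σ : List T}
    (hσ : isOutSeq (tagNet T) A σ) :
    isOutSeq (tagNet T) (cross A B) σ := by
  obtain ⟨hne, hall, hhead, hcond⟩ := hσ
  have hallA : ∀ t ∈ σ, t ∈ remQ (tagNet T) A :=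
    outSeq_all hpA ⟨hne, hall, hhead, hcond⟩
  refine ⟨hne, ?_, ?_, ?_⟩
  · intro t ht
    exact Or.inl (by
      rw [remQ_cross hAne hBne hpA hpB hsep]; exact Or.inl (hallA t ht))
  · intro t ht
    rw [remQ_cross hAne hBne hpA hpB hsep]
    exact Or.inl (hhead t ht)
  · intro i hi hpos
    have hgA : σ.get ⟨i, hi⟩ ∈ remQ (tagNet T) A := hallA _ (σ.get_mem _)
    rintro W ⟨⟨Z, hZ, Z', hZ', rfl⟩, hout⟩
    have hout' : Tag.out (σ.get ⟨i, hi⟩) ∈ Z := by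
      rcases mem_pre_tag.mp hout with hc | hc
      · exact hc
      · exact absurd hc (sep_not_out hsep (remQ_adj hgA) hZ')
    have hAc := hcond i hi hpos ⟨hZ, mem_pre_tag.mpr hout'⟩
    refine ⟨⟨Z, hZ, Z', hZ', rfl⟩, ?_⟩
    intro hep
    obtain ⟨u, hu, houtu, hninpu⟩ := mem_epreList_iff.mp hep
    have huσ : u ∈ σ := List.take_subset _ _ hu
    have houtuZ : Tag.out u ∈ Z := by
      rcases mem_pre_tag.mp houtu with hc | hc
      · exact hc
      · exact absurd hc (sep_not_out hsep (remQ_adj (hallA u huσ)) hZ')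
    exact hAc.2 (mem_epreList_iff.mpr ⟨u, hu, mem_pre_tag.mpr houtuZ,
      fun hc => not_inp_of_not_preQ (hallA u huσ).2 hZ (mem_post_tag.mp hc)⟩)

lemma covOut_A_to_C {A B : Set (Set (Tag T))}
    (hsep : separated (tagNet T) A B) {σ : List T}
    (hallA : ∀ t ∈ σ, t ∈ remQ (tagNet T) A)
    (h : A ⊆ epreList (tagNet T) σ) :
    cross A B ⊆ epreList (tagNet T) σ := by
  rintro W ⟨Z, hZ, Z', hZ', rfl⟩
  obtain ⟨t, ht, hpre, hnpost⟩ := mem_epreList_iff.mp (h hZ)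
  refine mem_epreList_iff.mpr ⟨t, ht,
    mem_pre_tag.mpr (Set.mem_union_left _ (mem_pre_tag.mp hpre)), ?_⟩
  intro hc
  rcases mem_post_tag.mp hc with hc' | hc'
  · exact not_inp_of_not_preQ (hallA t ht).2 hZ hc'
  · exact sep_not_inp hsep (remQ_adj (hallA t ht)) hZ' hc'

lemma enables_cross {A B : Set (Set (Tag T))} (hAne : A.Nonempty) (hBne : B.Nonempty)
    (hpA : pureDP (tagNet T) A) (hpB : pureDP (tagNet T) B)
    (hsep : separated (tagNet T) A B)
    (hAen : ∀ t ∈ insQ (tagNet T) A, ∀ u ∈ remQ (tagNet T) A,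
      (t, u) ∈ enablesQ (tagNet T) A)
    (hBen : ∀ t ∈ insQ (tagNet T) B, ∀ u ∈ remQ (tagNet T) B,
      (t, u) ∈ enablesQ (tagNet T) B) :
    ∀ t ∈ insQ (tagNet T) (cross A B), ∀ u ∈ remQ (tagNet T) (cross A B),
      (t, u) ∈ enablesQ (tagNet T) (cross A B) := by
  have hsep' := separated_symm hsep
  intro t ht u hu
  rw [insQ_cross hAne hBne hpA hpB hsep] at ht
  rw [remQ_cross hAne hBne hpA hpB hsep] at hu
  rcases ht with htA | htB <;> rcases hu with huA | huB
  · obtain ⟨W, ⟨hWA, hinp, hnout⟩, houtu⟩ := hAen t htA u huA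
    obtain ⟨Z', hZ'⟩ := hBne
    refine ⟨W ∪ Z', ⟨⟨W, hWA, Z', hZ', rfl⟩,
      mem_post_tag.mpr (Set.mem_union_left _ (mem_post_tag.mp hinp)), ?_⟩,
      mem_pre_tag.mpr (Set.mem_union_left _ (mem_pre_tag.mp houtu))⟩
    intro hc
    rcases mem_pre_tag.mp hc with hc' | hc'
    · exact hnout (mem_pre_tag.mpr hc')
    · exact sep_not_out hsep (insQ_adj htA) hZ' hc'
  · obtain ⟨Z, hZ, hinpZ⟩ := mem_preQ_iff.mp htA.1
    obtain ⟨Z', hZ', houtZ'⟩ := mem_postQ_iff.mp huB.1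
    refine ⟨Z ∪ Z', ⟨⟨Z, hZ, Z', hZ', rfl⟩,
      mem_post_tag.mpr (Set.mem_union_left _ hinpZ), ?_⟩,
      mem_pre_tag.mpr (Set.mem_union_right _ houtZ')⟩
    intro hc
    rcases mem_pre_tag.mp hc with hc' | hc'
    · exact pure_no_out hpA htA.1 hZ hc'
    · exact sep_not_out hsep (insQ_adj htA) hZ' hc'
  · obtain ⟨Z', hZ', hinpZ'⟩ := mem_preQ_iff.mp htB.1
    obtain ⟨Z, hZ, houtZ⟩ := mem_postQ_iff.mp huA.1
    refine ⟨Z ∪ Z', ⟨⟨Z, hZ, Z', hZ', rfl⟩,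
      mem_post_tag.mpr (Set.mem_union_right _ hinpZ'), ?_⟩,
      mem_pre_tag.mpr (Set.mem_union_left _ houtZ)⟩
    intro hc
    rcases mem_pre_tag.mp hc with hc' | hc'
    · exact sep_not_out hsep' (insQ_adj htB) hZ hc'
    · exact pure_no_out hpB htB.1 hZ' hc'
  · obtain ⟨W, ⟨hWB, hinp, hnout⟩, houtu⟩ := hBen t htB u huB
    obtain ⟨Z, hZ⟩ := hAne
    refine ⟨Z ∪ W, ⟨⟨Z, hZ, W, hWB, rfl⟩,
      mem_post_tag.mpr (Set.mem_union_right _ (mem_post_tag.mp hinp)), ?_⟩,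
      mem_pre_tag.mpr (Set.mem_union_right _ (mem_pre_tag.mp houtu))⟩
    intro hc
    rcases mem_pre_tag.mp hc with hc' | hc'
    · exact sep_not_out hsep' (insQ_adj htB) hZ hc'
    · exact hnout (mem_pre_tag.mpr hc')

end Stmt13Aux


/-- the cross-product of separated pure distributed places is a pure
distributed place whose (complete) in-sequences are the unions of the components'
(complete) in-sequences. -/
theorem stmt13 (T : Type) (A B : Set (Set (Tag T)))
    (hA : distPlace (tagNet T) A) (hB : distPlace (tagNet T) B)
    (hpA : pureDP (tagNet T) A) (hpB : pureDP (tagNet T) B)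
    (hsep : separated (tagNet T) A B) :
    distPlace (tagNet T) (cross A B) ∧
    pureDP (tagNet T) (cross A B) ∧
    {σ : List T | isInSeq (tagNet T) (cross A B) σ}
      = {σ | isInSeq (tagNet T) A σ} ∪ {σ | isInSeq (tagNet T) B σ} ∧
    {σ : List T | isCInSeq (tagNet T) (cross A B) σ}
      = {σ | isCInSeq (tagNet T) A σ} ∪ {σ | isCInSeq (tagNet T) B σ} := by
  obtain ⟨hAne, hAadj, hAen, hAin, hAout⟩ := hA
  obtain ⟨hBne, hBadj, hBen, hBin, hBout⟩ := hB
  have hsep' := separated_symm hsep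
  have hpC := pure_cross hAne hBne hpA hpB hsep
  have crossBA : cross B A = cross A B := cross_comm
  have hIn : ∀ σ : List T, isInSeq (tagNet T) (cross A B) σ ↔
      isInSeq (tagNet T) A σ ∨ isInSeq (tagNet T) B σ := by
    intro σ
    constructor
    · intro hσ
      obtain ⟨h0, hh⟩ : ∃ h0, σ.head? = some h0 := by
        cases σ with
        | nil => exact absurd rfl hσ.1
        | cons a l => exact ⟨a, rfl⟩
      have hh0 : h0 ∈ insQ (tagNet T) (cross A B) := hσ.2.2.1 h0 (by simp [hh])
      rw [insQ_cross hAne hBne hpA hpB hsep] at hh0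
      rcases hh0 with hc | hc
      · exact Or.inl (inSeq_C_to_A hAne hBne hpA hpB hsep hσ hh hc)
      · refine Or.inr (inSeq_C_to_A hBne hAne hpB hpA hsep' ?_ hh hc)
        rwa [crossBA]
    · rintro (hσ | hσ)
      · exact inSeq_A_to_C hAne hBne hpA hpB hsep hσ
      · rw [← crossBA]
        exact inSeq_A_to_C hBne hAne hpB hpA hsep' hσ
  have hCIn : ∀ σ : List T, isCInSeq (tagNet T) (cross A B) σ ↔
      isCInSeq (tagNet T) A σ ∨ isCInSeq (tagNet T) B σ := by
    intro σ
    constructor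
    · rintro ⟨hin, hcov⟩
      rcases (hIn σ).mp hin with hσ | hσ
      · exact Or.inl ⟨hσ, cov_C_to_A hBne hsep
          (fun t ht => insQ_adj (inSeq_all hpA hσ t ht)) hcov⟩
      · refine Or.inr ⟨hσ, cov_C_to_A hAne hsep'
          (fun t ht => insQ_adj (inSeq_all hpB hσ t ht)) ?_⟩
        rw [crossBA]
        exact hcov
    · rintro (⟨hσ, hcov⟩ | ⟨hσ, hcov⟩)
      · exact ⟨(hIn σ).mpr (Or.inl hσ), cov_A_to_C hcov⟩
      · refine ⟨(hIn σ).mpr (Or.inr hσ), ?_⟩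
        rw [← crossBA]
        exact cov_A_to_C hcov
  have hOut : ∀ σ : List T, isOutSeq (tagNet T) (cross A B) σ →
      isOutSeq (tagNet T) A σ ∨ isOutSeq (tagNet T) B σ := by
    intro σ hσ
    obtain ⟨h0, hh⟩ : ∃ h0, σ.head? = some h0 := by
      cases σ with
      | nil => exact absurd rfl hσ.1
      | cons a l => exact ⟨a, rfl⟩
    have hh0 : h0 ∈ remQ (tagNet T) (cross A B) := hσ.2.2.1 h0 (by simp [hh])
    rw [remQ_cross hAne hBne hpA hpB hsep] at hh0
    rcases hh0 with hc | hc
    · exact Or.inl (outSeq_C_to_A hAne hBne hpA hpB hsep hσ hh hc)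
    · refine Or.inr (outSeq_C_to_A hBne hAne hpB hpA hsep' ?_ hh hc)
      rwa [crossBA]
  refine ⟨⟨?_, ?_, ?_, ?_, ?_⟩, hpC, ?_, ?_⟩
  · obtain ⟨Z, hZ⟩ := hAne
    obtain ⟨Z', hZ'⟩ := hBne
    exact ⟨Z ∪ Z', Z, hZ, Z', hZ', rfl⟩
  · rw [readQ_pure hpC, Set.union_empty, insQ_pure hpC, remQ_pure hpC]
    rfl
  · exact enables_cross hAne hBne hpA hpB hsep hAen hBen
  · intro σ hσ
    rcases (hIn σ).mp hσ with h | h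
    · obtain ⟨τ, hpre, hcin⟩ := hAin σ h
      exact ⟨τ, hpre, (hCIn τ).mpr (Or.inl hcin)⟩
    · obtain ⟨τ, hpre, hcin⟩ := hBin σ h
      exact ⟨τ, hpre, (hCIn τ).mpr (Or.inr hcin)⟩
  · intro σ hσ
    rcases hOut σ hσ with h | h
    · obtain ⟨τ, hpre, hout, hcov⟩ := hAout σ h
      exact ⟨τ, hpre, outSeq_A_to_C hAne hBne hpA hpB hsep hout,
        covOut_A_to_C hsep (outSeq_all hpA hout) hcov⟩
    · obtain ⟨τ, hpre, hout, hcov⟩ := hBout σ h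
      refine ⟨τ, hpre, ?_, ?_⟩
      · rw [← crossBA]
        exact outSeq_A_to_C hBne hAne hpB hpA hsep' hout
      · rw [← crossBA]
        exact covOut_A_to_C hsep' (outSeq_all hpB hout) hcov
  · ext σ
    simpa using hIn σ
  · ext σ
    simpa using hCIn σ
end
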